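/- Let A be an invertible r×r real matrix and T ∈ ℝ^{(r−1)×r} the matrix with first column all ones and remaining block −Id_{r−1}. Then det(T · A · Tᵀ) = det(A) · (𝟙_rᵀ · A^{−1} · 𝟙_r). -/

import Mathlib

/-!
Let `S` be the `r × r` matrix with rows `e₀, e₀ - e₁, …, e₀ - e_{r-1}`, so that `T` is `S` without
its first row. Then `T A Tᵀ` is the `(0, 0)` minor of `S A Sᵀ`, whose determinant is the entry
`adj(S A Sᵀ)₀₀ = (adj Sᵀ · adj A · adj S)₀₀`. Since `S` is an involution, `adj S = det S • S` with
`(det S)² = 1`, so this entry is `(Sᵀ · adj A · S)₀₀ = 𝟙ᵀ · adj A · 𝟙`, the first column of `S`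
being `𝟙`. For invertible `A`, `adj A = det A • A⁻¹`.
-/

open Matrix BigOperators

namespace Matrix

def diffFromZero (R : Type*) [Ring R] (n : ℕ) : Matrix (Fin (n + 1)) (Fin (n + 1)) R :=
  of fun i j => if j = 0 then 1 else if j = i then -1 else 0

def zeroSubSucc (R : Type*) [Ring R] (n : ℕ) : Matrix (Fin n) (Fin (n + 1)) R :=
  (diffFromZero R n).submatrix Fin.succ id

section Ring

variable {R : Type*} [Ring R]

@[simp]
theorem diffFromZero_apply_zero_right (n : ℕ) (i : Fin (n + 1)) : diffFromZero R n i 0 = 1 := by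
  simp [diffFromZero]

theorem diffFromZero_mul_self (n : ℕ) : diffFromZero R n * diffFromZero R n = 1 := by
  ext i j
  cases i using Fin.cases <;> cases j using Fin.cases <;>
    simp [diffFromZero, mul_apply, Fin.sum_univ_succ, one_apply, Fin.succ_ne_zero, Fin.succ_inj,
      (Fin.succ_ne_zero _).symm, eq_comm]
  split_ifs <;> simp

end Ring

variable {R : Type*} [CommRing R]

theorem adjugate_eq_det_smul_of_mul_self_eq_one {ι : Type*} [Fintype ι] [DecidableEq ι]
    {S : Matrix ι ι R} (hS : S * S = 1) : adjugate S = S.det • S := by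
  rw [← Matrix.mul_one (adjugate S), ← hS, ← Matrix.mul_assoc, adjugate_mul, smul_mul, one_mul]

theorem adjugate_mul_mul_transpose_of_mul_self_eq_one {ι : Type*} [Fintype ι] [DecidableEq ι]
    {S : Matrix ι ι R} (hS : S * S = 1) (A : Matrix ι ι R) :
    adjugate (S * A * Sᵀ) = Sᵀ * adjugate A * S := by
  have hdet : S.det * S.det = 1 := by rw [← det_mul, hS, det_one]
  rw [adjugate_mul_distrib, adjugate_mul_distrib, ← adjugate_transpose,
    adjugate_eq_det_smul_of_mul_self_eq_one hS]
  simp only [transpose_smul, Matrix.smul_mul, Matrix.mul_smul, smul_smul, hdet, one_smul,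
    Matrix.mul_assoc]

theorem adjugate_eq_det_smul_inv {ι : Type*} [Fintype ι] [DecidableEq ι] {A : Matrix ι ι R}
    (hA : IsUnit A.det) : adjugate A = A.det • A⁻¹ := by
  rw [inv_def, smul_smul, Ring.mul_inverse_cancel _ hA, one_smul]

theorem det_submatrix_succ_succ {n : ℕ} (M : Matrix (Fin (n + 1)) (Fin (n + 1)) R) :
    (M.submatrix Fin.succ Fin.succ).det = adjugate M 0 0 := by
  simp [adjugate_fin_succ_eq_det_submatrix, Fin.succAbove_zero]

theorem det_zeroSubSucc_mul_mul_transpose (n : ℕ) (A : Matrix (Fin (n + 1)) (Fin (n + 1)) R) :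
    (zeroSubSucc R n * A * (zeroSubSucc R n)ᵀ).det = ∑ s, ∑ t, adjugate A s t := by
  set S := diffFromZero R n
  have hminor : zeroSubSucc R n * A * (zeroSubSucc R n)ᵀ =
      (S * A * Sᵀ).submatrix Fin.succ Fin.succ := by
    rw [zeroSubSucc, submatrix_mul _ _ _ id _ Function.bijective_id,
      submatrix_mul _ _ _ id id Function.bijective_id, transpose_submatrix, submatrix_id_id]
  rw [hminor, det_submatrix_succ_succ,
    adjugate_mul_mul_transpose_of_mul_self_eq_one (diffFromZero_mul_self n)]
  simp [mul_apply, Finset.sum_comm (γ := Fin (n + 1))]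

end Matrix

/-- For an invertible `r × r` real matrix `A` and `T` the `(r-1) × r` matrix with
first column all ones and remaining block `-Id_{r-1}`, one has
`det (T * A * Tᵀ) = det A * (𝟙ᵀ A⁻¹ 𝟙)`, the sum of entries of `A⁻¹` scaled by `det A`. -/
theorem determinant_lemma_inv (r : ℕ) (hr : 1 ≤ r) (A : Matrix (Fin r) (Fin r) ℝ)
    (hA : IsUnit A.det)
    (T : Matrix (Fin (r - 1)) (Fin r) ℝ)
    (hT : ∀ i j, T i j =
      if (j : ℕ) = 0 then 1 else if (j : ℕ) = (i : ℕ) + 1 then -1 else 0) :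
    (T * A * Tᵀ).det = A.det * ∑ s, ∑ t, A⁻¹ s t := by
  obtain ⟨n, rfl⟩ : ∃ n, r = n + 1 := ⟨r - 1, by omega⟩
  obtain rfl : T = zeroSubSucc ℝ n := by
    ext i j
    simp only [hT, zeroSubSucc, diffFromZero, of_apply, submatrix_apply, id, Fin.ext_iff,
      Fin.val_succ, Fin.val_zero]
  refine (det_zeroSubSucc_mul_mul_transpose n A).trans ?_
  simp [adjugate_eq_det_smul_inv hA, Finset.mul_sum]
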